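/- Fix m ≥ 1 and let f : ℕ → ℕ be defined by f(0) = 2, f(1) = 4, and f(k) = 3f(k−1) + 2f(k−2) for k ≥ 2. Let c = c_{m−1} ... c_0 be a codeword of NPC(m), with symbols viewed as natural numbers in {0,1,2,3}. For 0 ≤ i ≤ m−1 define: y_{i,1} = 1 if i+2 ≤ m−1, c_{i+2} ∈ {0,1}, c_{i+1} = 3, and c_i ∈ {2,3}, and y_{i,1} = 0 otherwise; y_{i,2} = 1 if y_{i,1} = 0, i+1 ≤ m−1, c_{i+1} ∈ {2,3}, and c_i ∈ {1,2,3}, and y_{i,2} = 0 otherwise. Then the lexicographic index g(c) of c in NPC(m) satisfies 4·g(c) = Σ_{i=0}^{m−1} [ (c_i − 2y_{i,1} − y_{i,2}) · f(i+1) + 2 y_{i,2} · f(i) ] (an equality of integers). -/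

import Mathlib

/-- The NP-LOCO code: words of length `m` over the alphabet `{0,1,2,3}`
(position `m-1` most significant) containing no contiguous subword `u 3 v` with
`u, v ∈ {0,1}` and no contiguous subword `u 0 v` with `u, v ∈ {2,3}`. -/
def NPC (m : ℕ) : Set (Fin m → Fin 4) :=
  {c | ∀ i : ℕ, ∀ h : i + 2 < m,
      ¬((c ⟨i + 2, h⟩ ∈ ({0, 1} : Set (Fin 4)) ∧ c ⟨i + 1, by omega⟩ = 3 ∧
            c ⟨i, by omega⟩ ∈ ({0, 1} : Set (Fin 4))) ∨
        (c ⟨i + 2, h⟩ ∈ ({2, 3} : Set (Fin 4)) ∧ c ⟨i + 1, by omega⟩ = 0 ∧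
            c ⟨i, by omega⟩ ∈ ({2, 3} : Set (Fin 4))))}

/-- `w` is lexicographically smaller than `c` (position `m-1` most significant):
at the most significant position where they differ, `w` has the smaller symbol. -/
def wordLT {m q : ℕ} (w c : Fin m → Fin q) : Prop :=
  ∃ k : Fin m, w k < c k ∧ ∀ j : Fin m, k < j → w j = c j

/-- The lexicographic index of `c` in the code `C`: the number of codewords of
`C` lexicographically smaller than `c`. -/
noncomputable def lexIndex {m q : ℕ} (C : Set (Fin m → Fin q)) (c : Fin m → Fin q) : ℕ :=
  {w ∈ C | wordLT w c}.ncard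

/-- The natural-number value of symbol `c_i`, with an out-of-alphabet default
for out-of-range indices. -/
def extVal {m q : ℕ} (c : Fin m → Fin q) (i : ℕ) : ℕ :=
  if h : i < m then (c ⟨i, h⟩ : ℕ) else q

/-- `y_{i,1} = 1` iff `i+2 ≤ m-1`, `c_{i+2} ∈ {0,1}`, `c_{i+1} = 3`, and `c_i ∈ {2,3}`. -/
def npY1 {m : ℕ} (c : Fin m → Fin 4) (i : ℕ) : ℤ :=
  if i + 2 < m ∧ extVal c (i + 2) ∈ ({0, 1} : Finset ℕ) ∧ extVal c (i + 1) = 3 ∧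
      extVal c i ∈ ({2, 3} : Finset ℕ)
  then 1 else 0

/-- `y_{i,2} = 1` iff `y_{i,1} = 0`, `i+1 ≤ m-1`, `c_{i+1} ∈ {2,3}`, and `c_i ∈ {1,2,3}`. -/
def npY2 {m : ℕ} (c : Fin m → Fin 4) (i : ℕ) : ℤ :=
  if npY1 c i = 0 ∧ i + 1 < m ∧ extVal c (i + 1) ∈ ({2, 3} : Finset ℕ) ∧
      extVal c i ∈ ({1, 2, 3} : Finset ℕ)
  then 1 else 0

/-!
The words lexicographically below `c` are sorted by the most significant position `k` where they
differ from `c` and by their symbol `a < c_k` there; the positions below `k` are then free subject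
to the code constraint. Call a pair of adjacent symbols (upper, lower) a pinch if it is `(u, 3)` with
`u ∈ {0,1}` or `(v, 0)` with `v ∈ {2,3}`: after a pinch only two symbols may follow, otherwise all
four, and exactly one of the four creates a new pinch. Hence the number of admissible completions of
length `n` is `f (n + 1) / 4` after a non-pinch and `f n / 2` after a pinch, these two numbers obeying
`F' = 3F + R`, `R' = 2F`, i.e. the recursion of `f`. The contribution of position `k` then depends
only on `c_{k+2}, c_{k+1}, c_k`, and a finite case check identifies it with the `k`-th summand.
-/

open Finset

theorem sum_ite_zero_ite {ι M : Type*} [AddCommMonoid M] (s : Finset ι) (p r : ι → Prop)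
    [DecidablePred p] [DecidablePred r] (a b : M) :
    ∑ i ∈ s, (if p i then 0 else if r i then b else a) =
      #{i ∈ s | ¬p i ∧ ¬r i} • a + #{i ∈ s | ¬p i ∧ r i} • b := by
  rw [sum_ite, sum_const_zero, zero_add, sum_ite, sum_const, sum_const, filter_filter,
    filter_filter, add_comm]

section LexicographicIndex

variable {m q : ℕ}

theorem lexIndex_eq_sum_card (C : Set (Fin m → Fin q)) [DecidablePred (· ∈ C)]
    (c : Fin m → Fin q) :
    lexIndex C c = ∑ k, ∑ a ∈ Iio (c k), #{w | w ∈ C ∧ w k = a ∧ ∀ j, k < j → w j = c j} := by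
  classical
  have hfin : {w ∈ C | wordLT w c} = ↑({w | w ∈ C ∧ wordLT w c} : Finset _) := by ext; simp
  have hunion : ({w | w ∈ C ∧ wordLT w c} : Finset _) =
      univ.biUnion fun k => {w | w ∈ C ∧ w k < c k ∧ ∀ j, k < j → w j = c j} := by
    ext w
    simp only [mem_filter, mem_biUnion, mem_univ, true_and]
    simp only [wordLT, exists_and_left]
  have hdisj : ((univ : Finset (Fin m)) : Set (Fin m)).PairwiseDisjoint
      fun k => ({w | w ∈ C ∧ w k < c k ∧ ∀ j, k < j → w j = c j} : Finset _) := by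
    intro k₁ _ k₂ _ hne
    refine disjoint_left.2 fun w h₁ h₂ => ?_
    simp only [mem_filter, mem_univ, true_and] at h₁ h₂
    rcases lt_or_gt_of_ne hne with h | h
    · exact (h₂.2.1.trans_eq (h₁.2.2 k₂ h).symm).false
    · exact (h₁.2.1.trans_eq (h₂.2.2 k₁ h).symm).false
  rw [lexIndex, hfin, Set.ncard_coe_finset, hunion, card_biUnion hdisj]
  refine sum_congr rfl fun k _ => ?_
  rw [card_eq_sum_card_fiberwise (f := fun w => w k) (t := Iio (c k))
    (fun w hw => by simpa using (mem_filter.1 hw).2.2.1)]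
  refine sum_congr rfl fun a ha => ?_
  rw [filter_filter]
  refine congrArg card (filter_congr fun w _ => ?_)
  constructor
  · rintro ⟨⟨hw, -, hup⟩, rfl⟩; exact ⟨hw, rfl, hup⟩
  · rintro ⟨hw, rfl, hup⟩; exact ⟨⟨hw, mem_Iio.1 ha, hup⟩, rfl⟩

end LexicographicIndex

section OfFnAppend

variable {α : Type*}

theorem ofFn_append_eq_ofFn_init_append {n : ℕ} (u : Fin (n + 1) → α) (t : List α) :
    List.ofFn u ++ t = List.ofFn (Fin.init u) ++ u (Fin.last n) :: t := by
  rw [List.ofFn_succ', List.concat_eq_append, List.append_assoc]; rfl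

theorem card_ofFn_append_succ [Fintype α] [DecidableEq α] (P : List α → Prop) [DecidablePred P] (t : List α) (n : ℕ) :
    #{u : Fin (n + 1) → α | P (List.ofFn u ++ t)} =
      ∑ a, #{v : Fin n → α | P (List.ofFn v ++ a :: t)} := by
  rw [card_eq_sum_card_fiberwise (f := fun u => u (Fin.last n)) (t := univ)
    (fun _ _ => mem_univ _)]
  refine sum_congr rfl fun a _ => ?_
  rw [filter_filter]
  refine card_bij' (fun u _ => Fin.init u) (fun v _ => Fin.snoc v a) ?_ ?_ ?_ ?_
  · intro u hu
    simp only [mem_filter, mem_univ, true_and] at hu ⊢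
    rw [ofFn_append_eq_ofFn_init_append, hu.2] at hu
    exact hu.1
  · intro v hv
    simp only [mem_filter, mem_univ, true_and] at hv ⊢
    rw [ofFn_append_eq_ofFn_init_append, Fin.init_snoc, Fin.snoc_last]
    exact ⟨hv, rfl⟩
  · intro u hu
    rw [← (mem_filter.1 hu).2.2]
    exact Fin.snoc_init_self u
  · intro v _
    exact Fin.init_snoc _ _

end OfFnAppend

section Splice

variable {α : Type*} {m : ℕ}

def splice (c : Fin m → α) (k : Fin m) (a : α) (u : Fin k → α) : Fin m → α :=
  fun j => if h : j < k then u ⟨j, h⟩ else if j = k then a else c j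

variable (c : Fin m → α) (k : Fin m) (a : α) (u : Fin k → α)

theorem splice_apply_lt {j : Fin m} (h : j < k) : splice c k a u j = u ⟨j, h⟩ := dif_pos h

theorem splice_apply_self : splice c k a u k = a := by simp [splice]

theorem splice_apply_gt {j : Fin m} (h : k < j) : splice c k a u j = c j := by
  simp [splice, h.not_gt, h.ne']

theorem ofFn_splice :
    List.ofFn (splice c k a u) = List.ofFn u ++ a :: (List.ofFn c).drop (k + 1) := by
  refine List.ext_getElem (by simp; omega) fun i h _ => ?_
  simp only [List.length_ofFn] at h
  rw [List.getElem_ofFn]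
  rcases lt_trichotomy i k with hi | rfl | hi
  · rw [splice_apply_lt c k a u (j := ⟨i, h⟩) hi, List.getElem_append_left (by simpa using hi)]
    simp
  · simp [splice_apply_self]
  · rw [splice_apply_gt c k a u (j := ⟨i, h⟩) hi, List.getElem_append_right (by simpa using hi.le)]
    simp only [List.length_ofFn, List.getElem_cons, List.getElem_drop, List.getElem_ofFn]
    rw [dif_neg (by omega)]
    congr
    omega

theorem splice_comp_castLE : splice c k a u ∘ Fin.castLE k.isLt.le = u :=
  funext fun i => splice_apply_lt c k a u i.isLt

theorem splice_eq_self_iff (w : Fin m → α) :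
    splice c k a (w ∘ Fin.castLE k.isLt.le) = w ↔ w k = a ∧ ∀ j, k < j → w j = c j := by
  constructor
  · intro h
    rw [← h]
    exact ⟨splice_apply_self .., fun j hj => splice_apply_gt c k a _ hj⟩
  · rintro ⟨ha, hup⟩
    funext j
    rcases lt_trichotomy j k with hj | rfl | hj
    · exact splice_apply_lt c k a _ hj
    · rw [splice_apply_self, ha]
    · rw [splice_apply_gt c k a _ hj, hup j hj]

theorem card_agree_above [Fintype α] [DecidableEq α] (P : List α → Prop) [DecidablePred P] :
    #{w : Fin m → α | P (List.ofFn w) ∧ w k = a ∧ ∀ j, k < j → w j = c j} =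
      #{v : Fin k → α | P (List.ofFn v ++ a :: (List.ofFn c).drop (k + 1))} := by
  refine card_bij' (fun w _ => w ∘ Fin.castLE k.isLt.le) (fun v _ => splice c k a v)
    ?_ ?_ ?_ ?_ <;> simp only [mem_filter, mem_univ, true_and]
  · rintro w ⟨hw, hagree⟩
    rwa [← ofFn_splice, (splice_eq_self_iff c k a w).2 hagree]
  · intro v hv
    rw [← splice_eq_self_iff, splice_comp_castLE, ofFn_splice]
    exact ⟨hv, rfl⟩
  · rintro w ⟨-, hagree⟩
    exact (splice_eq_self_iff c k a w).2 hagree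
  · intro v _
    exact splice_comp_castLE c k a v

end Splice

namespace NPLoco

def IsForbidden (x y : Option (Fin 4)) (z : Fin 4) : Prop :=
  (x ∈ ({some 0, some 1} : Finset _) ∧ y = some 3 ∧ z ∈ ({0, 1} : Finset _)) ∨
    (x ∈ ({some 2, some 3} : Finset _) ∧ y = some 0 ∧ z ∈ ({2, 3} : Finset _))

instance (x y : Option (Fin 4)) (z : Fin 4) : Decidable (IsForbidden x y z) := by
  unfold IsForbidden; infer_instance

def IsPinch (y : Option (Fin 4)) (z : Fin 4) : Prop :=
  (y ∈ ({some 0, some 1} : Finset _) ∧ z = 3) ∨ (y ∈ ({some 2, some 3} : Finset _) ∧ z = 0)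

instance (y : Option (Fin 4)) (z : Fin 4) : Decidable (IsPinch y z) := by
  unfold IsPinch; infer_instance

/-- A word `c` is handled as the list `List.ofFn c`, least significant symbol first, so that the
symbols above a position form a tail of the list; past its end `l[i]?` is `none`, which forbids
nothing. -/
def Valid (l : List (Fin 4)) : Prop :=
  ∀ i (h : i < l.length), ¬IsForbidden l[i + 2]? l[i + 1]? l[i]

instance (l : List (Fin 4)) : Decidable (Valid l) := by
  unfold Valid; infer_instance

theorem isForbidden_none_left (y : Option (Fin 4)) (z : Fin 4) : ¬IsForbidden none y z := by
  simp [IsForbidden]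

theorem isForbidden_some_iff (x y z : Fin 4) :
    IsForbidden (some x) (some y) z ↔
      (x ∈ ({0, 1} : Set (Fin 4)) ∧ y = 3 ∧ z ∈ ({0, 1} : Set (Fin 4))) ∨
        (x ∈ ({2, 3} : Set (Fin 4)) ∧ y = 0 ∧ z ∈ ({2, 3} : Set (Fin 4))) := by
  simp [IsForbidden]

theorem mem_NPC_iff_valid_ofFn {m : ℕ} (c : Fin m → Fin 4) :
    c ∈ NPC m ↔ Valid (List.ofFn c) := by
  constructor
  · intro hc i hi
    by_cases h : i + 2 < m
    · simpa [List.getElem?_ofFn, h, show i + 1 < m by omega, isForbidden_some_iff] using hc i h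
    · simpa [List.getElem?_ofFn, h] using isForbidden_none_left _ _
  · intro hv i h
    have := hv i (by simp only [List.length_ofFn]; omega)
    rw [List.getElem_ofFn] at this
    simpa [List.getElem?_ofFn, h, show i + 1 < m by omega, isForbidden_some_iff] using this

instance (m : ℕ) : DecidablePred (· ∈ NPC m) := fun c =>
  decidable_of_iff _ (mem_NPC_iff_valid_ofFn c).symm

theorem valid_cons_iff (z : Fin 4) (t : List (Fin 4)) :
    Valid (z :: t) ↔ ¬IsForbidden t[1]? t[0]? z ∧ Valid t := by
  constructor
  · intro h
    refine ⟨h 0 (by simp), fun i hi => ?_⟩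
    exact h (i + 1) (by simpa using hi)
  · rintro ⟨h₀, ht⟩ (_ | i) hi
    · exact h₀
    · exact ht i (by simpa using hi)

theorem Valid.of_append {s t : List (Fin 4)} (h : Valid (s ++ t)) : Valid t := by
  induction s with
  | nil => exact h
  | cons z s ih => exact ih ((valid_cons_iff z _).1 h).2

theorem card_successors (y : Option (Fin 4)) (z : Fin 4) :
    #{a | ¬IsForbidden y (some z) a ∧ ¬IsPinch (some z) a} = (if IsPinch y z then 2 else 3) ∧
      #{a | ¬IsForbidden y (some z) a ∧ IsPinch (some z) a} = if IsPinch y z then 0 else 1 := by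
  revert y z; decide +kernel

theorem four_mul_card_valid_append (f : ℕ → ℕ) (hf0 : f 0 = 2) (hf1 : f 1 = 4)
    (hrec : ∀ n, f (n + 2) = 3 * f (n + 1) + 2 * f n) (n : ℕ) (z : Fin 4) (t : List (Fin 4)) :
    4 * #{v : Fin n → Fin 4 | Valid (List.ofFn v ++ z :: t)} =
      if Valid (z :: t) then (if IsPinch t[0]? z then 2 * f n else f (n + 1)) else 0 := by
  induction n generalizing z t with
  | zero =>
    by_cases hv : Valid (z :: t) <;> by_cases hp : IsPinch t[0]? z <;> simp [hv, hp, hf0, hf1]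
  | succ n ih =>
    rw [card_ofFn_append_succ, mul_sum]
    simp only [ih, valid_cons_iff _ (z :: t), List.getElem?_cons_zero, List.getElem?_cons_succ]
    by_cases hv : Valid (z :: t)
    · simp only [hv, and_true, ite_not]
      rw [sum_ite_zero_ite, (card_successors _ _).1, (card_successors _ _).2]
      split_ifs <;> simp [hrec]
    · simp [hv]

theorem four_mul_card_NPC_agree_above (f : ℕ → ℕ) (hf0 : f 0 = 2) (hf1 : f 1 = 4)
    (hrec : ∀ n, f (n + 2) = 3 * f (n + 1) + 2 * f n) {m : ℕ} (c : Fin m → Fin 4)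
    (hc : Valid (List.ofFn c)) (k : Fin m) (a : Fin 4) :
    4 * #{w | w ∈ NPC m ∧ w k = a ∧ ∀ j, k < j → w j = c j} =
      if IsForbidden (List.ofFn c)[(k : ℕ) + 2]? (List.ofFn c)[(k : ℕ) + 1]? a then 0
      else if IsPinch (List.ofFn c)[(k : ℕ) + 1]? a then 2 * f k else f (k + 1) := by
  have hdrop : Valid ((List.ofFn c).drop (k + 1)) :=
    Valid.of_append (by rwa [List.take_append_drop])
  rw [filter_congr fun w _ => and_congr_left' (mem_NPC_iff_valid_ofFn w), card_agree_above,
    four_mul_card_valid_append f hf0 hf1 hrec]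
  simp [valid_cons_iff, hdrop, List.getElem?_drop, add_assoc]

def symVal (o : Option (Fin 4)) : ℕ := o.elim 4 Fin.val

@[simp] theorem symVal_some (x : Fin 4) : symVal (some x) = x := rfl

def windowY1 (x y : Option (Fin 4)) (e : Fin 4) : ℤ :=
  if symVal x ∈ ({0, 1} : Finset ℕ) ∧ symVal y = 3 ∧ (e : ℕ) ∈ ({2, 3} : Finset ℕ) then 1 else 0

def windowY2 (x y : Option (Fin 4)) (e : Fin 4) : ℤ :=
  if windowY1 x y e = 0 ∧ symVal y ∈ ({2, 3} : Finset ℕ) ∧ (e : ℕ) ∈ ({1, 2, 3} : Finset ℕ)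
  then 1 else 0

theorem extVal_eq_symVal {m : ℕ} (c : Fin m → Fin 4) (i : ℕ) :
    extVal c i = symVal (List.ofFn c)[i]? := by
  unfold extVal
  split_ifs with h <;> simp [symVal, h]

theorem npY1_eq_windowY1 {m : ℕ} (c : Fin m → Fin 4) (k : Fin m) :
    npY1 c k = windowY1 (List.ofFn c)[(k : ℕ) + 2]? (List.ofFn c)[(k : ℕ) + 1]? (c k) := by
  unfold npY1 windowY1
  by_cases h : k + 2 < m
  · simp [extVal_eq_symVal, h]
  · simp [extVal_eq_symVal, h, symVal, List.getElem?_ofFn]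

theorem npY2_eq_windowY2 {m : ℕ} (c : Fin m → Fin 4) (k : Fin m) :
    npY2 c k = windowY2 (List.ofFn c)[(k : ℕ) + 2]? (List.ofFn c)[(k : ℕ) + 1]? (c k) := by
  unfold npY2 windowY2
  rw [npY1_eq_windowY1]
  by_cases h : k + 1 < m
  · simp [extVal_eq_symVal, h]
  · simp [extVal_eq_symVal, h, symVal, List.getElem?_ofFn]

theorem card_smaller_successors (x y : Option (Fin 4)) (e : Fin 4) (h : ¬IsForbidden x y e) :
    (#{a ∈ Iio e | ¬IsForbidden x y a ∧ ¬IsPinch y a} : ℤ) =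
        e - 2 * windowY1 x y e - windowY2 x y e ∧
      (#{a ∈ Iio e | ¬IsForbidden x y a ∧ IsPinch y a} : ℤ) = windowY2 x y e := by
  revert x y e; decide +kernel

theorem sum_Iio_eq_window (x y : Option (Fin 4)) (e : Fin 4) (h : ¬IsForbidden x y e)
    (A B : ℤ) :
    ∑ a ∈ Iio e, (if IsForbidden x y a then 0 else if IsPinch y a then 2 * B else A) =
      (e - 2 * windowY1 x y e - windowY2 x y e) * A + 2 * windowY2 x y e * B := by
  rw [sum_ite_zero_ite, nsmul_eq_mul, nsmul_eq_mul, (card_smaller_successors x y e h).1,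
    (card_smaller_successors x y e h).2]
  ring

end NPLoco

open NPLoco in
theorem stmt18_general (m : ℕ) (f : ℕ → ℕ) (hf0 : f 0 = 2) (hf1 : f 1 = 4)
    (hrec : ∀ k : ℕ, 2 ≤ k → f k = 3 * f (k - 1) + 2 * f (k - 2))
    (c : Fin m → Fin 4) (hc : c ∈ NPC m) :
    4 * (lexIndex (NPC m) c : ℤ) =
      ∑ i : Fin m,
        ((((c i : ℕ) : ℤ) - 2 * npY1 c (i : ℕ) - npY2 c (i : ℕ)) * (f ((i : ℕ) + 1) : ℤ)
          + 2 * npY2 c (i : ℕ) * (f (i : ℕ) : ℤ)) := by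
  have hrec' (n : ℕ) : f (n + 2) = 3 * f (n + 1) + 2 * f n := hrec (n + 2) (by omega)
  have hv := (mem_NPC_iff_valid_ofFn c).1 hc
  rw [lexIndex_eq_sum_card, Nat.cast_sum, mul_sum]
  refine sum_congr rfl fun k _ => ?_
  have hk : ¬IsForbidden (List.ofFn c)[(k : ℕ) + 2]? (List.ofFn c)[(k : ℕ) + 1]? (c k) := by
    simpa using hv k (by simp)
  rw [npY1_eq_windowY1, npY2_eq_windowY2, ← sum_Iio_eq_window _ _ _ hk, Nat.cast_sum, mul_sum]
  refine sum_congr rfl fun a _ => ?_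
  rw [← Nat.cast_ofNat, ← Nat.cast_mul, four_mul_card_NPC_agree_above f hf0 hf1 hrec' c hv]
  split_ifs <;> simp

theorem stmt18 (m : ℕ) (hm : 1 ≤ m) (f : ℕ → ℕ) (hf0 : f 0 = 2) (hf1 : f 1 = 4)
    (hrec : ∀ k : ℕ, 2 ≤ k → f k = 3 * f (k - 1) + 2 * f (k - 2))
    (c : Fin m → Fin 4) (hc : c ∈ NPC m) :
    4 * (lexIndex (NPC m) c : ℤ) =
      ∑ i : Fin m,
        ((((c i : ℕ) : ℤ) - 2 * npY1 c (i : ℕ) - npY2 c (i : ℕ)) * (f ((i : ℕ) + 1) : ℤ)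
          + 2 * npY2 c (i : ℕ) * (f (i : ℕ) : ℤ)) :=
  stmt18_general m f hf0 hf1 hrec c hc
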